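/- Let ε ∈ ℝ and let f : ℝ → ℝ be twice differentiable with f''(ω) = f(ω)·f'(ω) for all ω. Define ξ(t,x,v) = ε and θ(t,x,v) = f(x + εt) on ℝ³. Then the pair (ξ, θ) satisfies the determining system for reduction operators of the potential fast diffusion equation on ℝ³. (This verifies Case 1, Q = ∂_t + ε∂_x + f(x+εt)∂_v, of the classification theorem of non-Lie reduction operators.) -/
import Mathlib


/-- Partial derivative with respect to the first variable `t`. -/
noncomputable def pt3 (f : ℝ × ℝ × ℝ → ℝ) (p : ℝ × ℝ × ℝ) : ℝ :=
  deriv (fun t => f (t, p.2.1, p.2.2)) p.1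

/-- Partial derivative with respect to the second variable `x`. -/
noncomputable def px3 (f : ℝ × ℝ × ℝ → ℝ) (p : ℝ × ℝ × ℝ) : ℝ :=
  deriv (fun x => f (p.1, x, p.2.2)) p.2.1

/-- Partial derivative with respect to the third variable `v`. -/
noncomputable def pv3 (f : ℝ × ℝ × ℝ → ℝ) (p : ℝ × ℝ × ℝ) : ℝ :=
  deriv (fun v => f (p.1, p.2.1, v)) p.2.2

/-- The determining system for reduction operators `Q = ∂_t + ξ∂_x + θ∂_v`
of the potential fast diffusion equation `v_t = v_xx / v_x`:
(i) `ξ_vv = ξ ξ_v`; (ii) `ξ_t = 2ξ_xv − θ_vv − θ_v ξ + θ ξ_v − ξ ξ_x`;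
(iii) `θ_xx = θ θ_x`; (iv) `θ_t = 2θ_xv − ξ_xx − ξ_x θ + ξ θ_x − θ θ_v`. -/
def DeterminingSystem (ξ θ : ℝ × ℝ × ℝ → ℝ) (Ω : Set (ℝ × ℝ × ℝ)) : Prop :=
  ∀ p ∈ Ω,
    pv3 (pv3 ξ) p = ξ p * pv3 ξ p ∧
    pt3 ξ p =
      2 * pv3 (px3 ξ) p - pv3 (pv3 θ) p - pv3 θ p * ξ p + θ p * pv3 ξ p - ξ p * px3 ξ p ∧
    px3 (px3 θ) p = θ p * px3 θ p ∧
    pt3 θ p =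
      2 * pv3 (px3 θ) p - px3 (px3 ξ) p - px3 ξ p * θ p + ξ p * px3 θ p - θ p * pv3 θ p

/-- Case 1 of the classification of non-Lie reduction operators of the potential fast
diffusion equation: `Q = ∂_t + ε∂_x + f(x + εt)∂_v` with `f'' = f f'`. -/
theorem reduction_operator_case1
    (ε : ℝ) (f : ℝ → ℝ)
    (hf : ∀ ω : ℝ, DifferentiableAt ℝ f ω)
    (hf' : ∀ ω : ℝ, DifferentiableAt ℝ (deriv f) ω)
    (hode : ∀ ω : ℝ, deriv (deriv f) ω = f ω * deriv f ω) :
    DeterminingSystem (fun _ => ε) (fun p => f (p.2.1 + ε * p.1)) Set.univ := by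

  intro p _
  set ω := p.2.1 + ε * p.1 with hω
  -- ξ is constant
  have hξt : pt3 (fun _ => ε) p = 0 := by simp [pt3]
  have hξx : px3 (fun _ => ε) = fun _ => (0:ℝ) := by
    funext q; simp [px3]
  have hξv : pv3 (fun _ => ε) = fun _ => (0:ℝ) := by
    funext q; simp [pv3]
  -- θ derivatives
  have hθv : pv3 (fun p : ℝ × ℝ × ℝ => f (p.2.1 + ε * p.1)) = fun _ => (0:ℝ) := by
    funext q; simp [pv3]
  have hθx : px3 (fun p : ℝ × ℝ × ℝ => f (p.2.1 + ε * p.1))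
      = fun q : ℝ × ℝ × ℝ => deriv f (q.2.1 + ε * q.1) := by
    funext q
    simp only [px3]
    exact deriv_comp_add_const f (ε * q.1) q.2.1
  have hθxx : px3 (px3 (fun p : ℝ × ℝ × ℝ => f (p.2.1 + ε * p.1))) p
      = deriv (deriv f) ω := by
    rw [hθx]
    simp only [px3]
    exact deriv_comp_add_const (deriv f) (ε * p.1) p.2.1
  have hθxv : pv3 (px3 (fun p : ℝ × ℝ × ℝ => f (p.2.1 + ε * p.1))) p = 0 := by
    rw [hθx]; simp [pv3]
  have hθt : pt3 (fun p : ℝ × ℝ × ℝ => f (p.2.1 + ε * p.1)) p = deriv f ω * ε := by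
    have hg : HasDerivAt (fun t : ℝ => p.2.1 + ε * t) ε p.1 := by
      simpa using ((hasDerivAt_id p.1).const_mul ε).const_add p.2.1
    have h : HasDerivAt (fun t : ℝ => f (p.2.1 + ε * t)) (deriv f ω * ε) p.1 :=
      (hf ω).hasDerivAt.comp p.1 hg
    simpa [pt3] using h.deriv
  refine ⟨?_, ?_, ?_, ?_⟩
  · rw [hξv]; simp [pv3]
  · rw [hξt, hξx, hξv, hθv]; simp [pv3]
  · rw [hθxx, hθx, hode ω]
  · rw [hθt, hθxv, hξx, hθx, hθv]
    simp [px3, pv3]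
    ring
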